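/- arXiv:2002.04122 — 4 statements merged into one kernel-verified Lean document; each statement's English description precedes it below -/
import Mathlib

section
/- For 0 < x < 1/2 and η ≥ 1, the sum Σ_{k=0}^∞ exp(2^k log x − (1+η)/2^{k+1}) is at most (13/4) · exp(−√(−2 (log x)(1+η))). -/
/-!
With `L = -log x`, `s = √(2L(1 + η))` and `ρ = 2L/s`, completing the square turns the `k`-th
term into `exp (-s) * bump (s/2) (2^k ρ)`, where `bump c ρ = exp (-c (ρ + ρ⁻¹ - 2))` and
`s/2 ≥ √(log 2) > 0.83`. The bump is invariant under `ρ ↦ ρ⁻¹` and decreasing on `[1, ∞)`.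
Extending the sum over `k` to all of `ℤ` and folding it at `ρ = 1` bounds it by `g a + g (2/a)`
for some `a ∈ [1, 2]`, where `g a = ∑_{j ≥ 0} bump c (2^j a)`. One of `a`, `2/a` is at least
`7/5`, so this is at most `g 1 + g (7/5)`, and three terms of each series plus a geometric tail
give `13/4`.
-/

open Real Set

noncomputable def bump (c ρ : ℝ) : ℝ := exp (-(c * (ρ + ρ⁻¹ - 2)))

noncomputable def dyadicBumpSum (c x : ℝ) : ℝ := ∑' j : ℕ, bump c (2 ^ j * x)

section Bump

variable {c c' ρ x y : ℝ}

lemma bump_inv : bump c ρ⁻¹ = bump c ρ := by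
  rw [bump, bump, inv_inv, add_comm ρ⁻¹]

lemma add_inv_sub_two_nonneg (hρ : 0 < ρ) : 0 ≤ ρ + ρ⁻¹ - 2 := by
  have : ρ + ρ⁻¹ - 2 = (ρ - 1) ^ 2 / ρ := by field_simp; ring
  rw [this]; positivity

lemma bump_le_bump_of_le_left (hc : c ≤ c') (hρ : 0 < ρ) : bump c' ρ ≤ bump c ρ :=
  exp_le_exp.2 <| neg_le_neg <| mul_le_mul_of_nonneg_right hc (add_inv_sub_two_nonneg hρ)

lemma bump_le_bump_of_le_right (hc : 0 ≤ c) (hx : 1 ≤ x) (hxy : x ≤ y) :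
    bump c y ≤ bump c x := by
  have hy : 0 < y := by linarith
  have key : x + x⁻¹ ≤ y + y⁻¹ := by
    have : y + y⁻¹ - (x + x⁻¹) = (y - x) * (x * y - 1) / (x * y) := by field_simp; ring
    have : 0 ≤ (y - x) * (x * y - 1) / (x * y) := by
      apply div_nonneg (mul_nonneg (by linarith) (by nlinarith)) (by positivity)
    linarith
  exact exp_le_exp.2 <| neg_le_neg <| mul_le_mul_of_nonneg_left (by linarith) hc

lemma bump_le_exp_neg (hc : 0 ≤ c) (hρ : 0 < ρ) : bump c ρ ≤ exp (-(c * (ρ - 2))) :=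
  exp_le_exp.2 <| neg_le_neg <| mul_le_mul_of_nonneg_left (by linarith [inv_pos.2 hρ]) hc

lemma bump_two_pow_add_three_mul_le (hc : 0 ≤ c) (hx : 1 ≤ x) (j : ℕ) :
    bump c (2 ^ (j + 3) * x) ≤ exp (-(6 * c)) ^ (j + 1) := by
  have hj : 6 * ((j : ℝ) + 1) + 2 ≤ 2 ^ (j + 3) := by
    have : (j : ℝ) + 1 ≤ 2 ^ j := by exact_mod_cast Nat.lt_two_pow_self
    rw [pow_add]; linarith
  have h2 : (2 : ℝ) ^ (j + 3) ≤ 2 ^ (j + 3) * x := le_mul_of_one_le_right (by positivity) hx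
  refine (bump_le_exp_neg hc (by positivity)).trans ?_
  rw [← exp_nat_mul]
  refine exp_le_exp.2 ?_
  push_cast
  nlinarith

lemma summable_bump_two_pow_mul (hc : 0 < c) (hx : 1 ≤ x) :
    Summable fun j : ℕ => bump c (2 ^ j * x) := by
  have hq : exp (-(6 * c)) < 1 := exp_lt_one_iff.2 (by linarith)
  refine (summable_nat_add_iff 3).1 <| Summable.of_nonneg_of_le (fun _ => (exp_pos _).le)
    (bump_two_pow_add_three_mul_le hc.le hx) ?_
  exact (summable_geometric_of_lt_one (exp_pos _).le hq).comp_injective (add_left_injective 1)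

lemma dyadicBumpSum_antitoneOn (hc : 0 < c) : AntitoneOn (dyadicBumpSum c) (Ici 1) := by
  intro x hx y hy hxy
  refine Summable.tsum_le_tsum (fun j => bump_le_bump_of_le_right hc.le ?_ ?_)
    (summable_bump_two_pow_mul hc hy) (summable_bump_two_pow_mul hc hx)
  · exact one_le_mul_of_one_le_of_one_le (one_le_pow₀ one_le_two) hx
  · exact mul_le_mul_of_nonneg_left hxy (by positivity)

lemma dyadicBumpSum_le_add_geometric_tail (hc : 0 < c) (hx : 1 ≤ x) :
    dyadicBumpSum c x ≤ bump c x + bump c (2 * x) + bump c (4 * x) +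
      exp (-(6 * c)) / (1 - exp (-(6 * c))) := by
  set q := exp (-(6 * c))
  have hq : q < 1 := exp_lt_one_iff.2 (by linarith)
  have htail : ∑' j : ℕ, bump c (2 ^ (j + 3) * x) ≤ q / (1 - q) := by
    calc ∑' j : ℕ, bump c (2 ^ (j + 3) * x) ≤ ∑' j : ℕ, q * q ^ j :=
          Summable.tsum_le_tsum (fun j => (bump_two_pow_add_three_mul_le hc.le hx j).trans_eq
            (pow_succ' q j)) ((summable_nat_add_iff 3).2 (summable_bump_two_pow_mul hc hx))
            ((summable_geometric_of_lt_one (exp_pos _).le hq).mul_left q)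
      _ = q / (1 - q) := by
          rw [tsum_mul_left, tsum_geometric_of_lt_one (exp_pos _).le hq, div_eq_mul_inv]
  rw [dyadicBumpSum, ← (summable_bump_two_pow_mul hc hx).sum_add_tsum_nat_add 3]
  simp only [Finset.sum_range_succ, Finset.sum_range_zero, zero_add, pow_zero, one_mul, pow_one]
  rw [show (2 : ℝ) ^ 2 = 4 by norm_num]
  linarith

lemma exists_tsum_bump_two_pow_mul_le (hc : 0 < c) (hρ : 0 < ρ) :
    ∃ a ∈ Icc (1 : ℝ) 2,
      ∑' k : ℕ, bump c (2 ^ k * ρ) ≤ dyadicBumpSum c a + dyadicBumpSum c (2 / a) := by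
  obtain ⟨n, hn₁, hn₂⟩ := exists_mem_Ico_zpow hρ one_lt_two
  have h2 : (2 : ℝ) ≠ 0 := two_ne_zero
  have h2n : (0 : ℝ) < 2 ^ n := zpow_pos two_pos n
  set a := ρ / 2 ^ n
  have ha₁ : 1 ≤ a := (one_le_div h2n).2 hn₁
  have ha₂ : a < 2 := by rwa [div_lt_iff₀ h2n, ← zpow_one_add₀ h2, add_comm]
  let F : ℤ → ℝ := fun j => bump c (2 ^ j * a)
  have hF_nat : ∀ j : ℕ, F j = bump c (2 ^ j * a) := fun j => by simp [F]
  have hF_neg : ∀ j : ℕ, F (-(j + 1)) = bump c (2 ^ j * (2 / a)) := fun j => by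
    rw [← bump_inv]
    simp only [F, zpow_neg, zpow_add_one₀ h2, zpow_natCast]
    congr 1
    field_simp
  have hs_nat : Summable fun j : ℕ => F j := by
    simpa only [hF_nat] using summable_bump_two_pow_mul hc ha₁
  have hs_neg : Summable fun j : ℕ => F (-(j + 1)) := by
    simpa only [hF_neg] using summable_bump_two_pow_mul hc
      ((one_le_div (by linarith)).2 ha₂.le)
  refine ⟨a, ⟨ha₁, ha₂.le⟩, ?_⟩
  calc ∑' k : ℕ, bump c (2 ^ k * ρ) = ∑' k : ℕ, F (k + n) := by
        congr 1; ext k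
        simp only [F, zpow_add₀ h2, zpow_natCast, a]
        field_simp
    _ ≤ ∑' j : ℤ, F j :=
        tsum_comp_le_tsum_of_inj (hs_nat.of_nat_of_neg_add_one hs_neg)
          (fun _ => (exp_pos _).le) (add_left_injective n |>.comp Nat.cast_injective)
    _ = dyadicBumpSum c a + dyadicBumpSum c (2 / a) := by
        rw [tsum_of_nat_of_neg_add_one hs_nat hs_neg]
        simp only [hF_nat, hF_neg, dyadicBumpSum]

lemma dyadicBumpSum_add_le (hc : 0 < c) {a : ℝ} (ha : a ∈ Icc (1 : ℝ) 2) :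
    dyadicBumpSum c a + dyadicBumpSum c (2 / a) ≤
      dyadicBumpSum c 1 + dyadicBumpSum c (7 / 5) := by
  obtain ⟨ha₁, ha₂⟩ := ha
  have hanti := dyadicBumpSum_antitoneOn hc
  have h2a : 1 ≤ 2 / a := (one_le_div (by linarith)).2 ha₂
  have h1 : (1 : ℝ) ∈ Ici 1 := self_mem_Ici
  have h75 : (7 / 5 : ℝ) ∈ Ici 1 := by norm_num
  rcases le_total a (10 / 7) with h | h
  · have : 7 / 5 ≤ 2 / a := by rw [le_div_iff₀ (by linarith)]; linarith
    exact add_le_add (hanti h1 ha₁ ha₁) (hanti h75 h2a this)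
  · have : 7 / 5 ≤ a := by linarith
    rw [add_comm]
    exact add_le_add (hanti h1 h2a h2a) (hanti h75 ha₁ this)

lemma exp_neg_le_of_one_le_mul_sum (hy : 0 ≤ y) {p : ℝ} (n : ℕ)
    (h : 1 ≤ p * ∑ i ∈ Finset.range n, y ^ i / i.factorial) : exp (-y) ≤ p := by
  have hp : 0 ≤ p := by
    by_contra! hp
    nlinarith [Finset.sum_nonneg fun i (_ : i ∈ Finset.range n) =>
      div_nonneg (pow_nonneg hy i) (Nat.cast_nonneg (α := ℝ) i.factorial)]
  rw [exp_neg, inv_le_iff_one_le_mul₀ (exp_pos y)]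
  exact h.trans (by gcongr; exact sum_le_exp_of_nonneg hy n)

lemma dyadicBumpSum_one_add_seven_fifths_le (hc : 83 / 100 ≤ c) :
    dyadicBumpSum c 1 + dyadicBumpSum c (7 / 5) ≤ 13 / 4 := by
  have hc₀ : 0 < c := by linarith
  have hq : exp (-(6 * c)) ≤ 1 / 100 :=
    (exp_le_exp.2 (by linarith)).trans <| exp_neg_le_of_one_le_mul_sum (y := 6 * (83 / 100))
      (by norm_num) 8 (by norm_num [Finset.sum_range_succ, Nat.factorial])
  have htail : exp (-(6 * c)) / (1 - exp (-(6 * c))) ≤ 1 / 99 := by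
    rw [div_le_iff₀ (by linarith)]; linarith
  have hbump : ∀ ρ p : ℝ, 0 < ρ →
      1 ≤ p * ∑ i ∈ Finset.range 6, (83 / 100 * (ρ + ρ⁻¹ - 2)) ^ i / i.factorial →
      bump c ρ ≤ p := fun ρ p hρ h =>
    (bump_le_bump_of_le_left hc hρ).trans <|
      exp_neg_le_of_one_le_mul_sum (mul_nonneg (by norm_num) (add_inv_sub_two_nonneg hρ)) 6 h
  have h1 : bump c 1 = 1 := by norm_num [bump]
  have h2 := hbump 2 (661 / 1000) (by norm_num) (by norm_num [Finset.sum_range_succ, Nat.factorial])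
  have h4 := hbump 4 (157 / 1000) (by norm_num) (by norm_num [Finset.sum_range_succ, Nat.factorial])
  have h75 := hbump (7 / 5) (910 / 1000) (by norm_num)
    (by norm_num [Finset.sum_range_succ, Nat.factorial])
  have h145 := hbump (14 / 5) (383 / 1000) (by norm_num)
    (by norm_num [Finset.sum_range_succ, Nat.factorial])
  have h285 := hbump (28 / 5) (49 / 1000) (by norm_num)
    (by norm_num [Finset.sum_range_succ, Nat.factorial])
  have s1 := dyadicBumpSum_le_add_geometric_tail hc₀ (x := 1) le_rfl
  have s75 := dyadicBumpSum_le_add_geometric_tail hc₀ (x := 7 / 5) (by norm_num)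
  norm_num at s1 s75
  linarith

theorem tsum_bump_two_pow_mul_le (hc : 83 / 100 ≤ c) (hρ : 0 < ρ) :
    ∑' k : ℕ, bump c (2 ^ k * ρ) ≤ 13 / 4 := by
  have hc₀ : 0 < c := by linarith
  obtain ⟨a, ha, hsum⟩ := exists_tsum_bump_two_pow_mul_le hc₀ hρ
  exact hsum.trans <| (dyadicBumpSum_add_le hc₀ ha).trans <|
    dyadicBumpSum_one_add_seven_fifths_le hc

end Bump

lemma exp_two_pow_mul_sub_eq {l A s : ℝ} (hl : l ≠ 0) (hs : 0 < s) (hsA : s ^ 2 = -(2 * l * A))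
    (k : ℕ) :
    exp (2 ^ k * l - A / 2 ^ (k + 1)) = exp (-s) * bump (s / 2) (2 ^ k * (-2 * l / s)) := by
  rw [bump, ← exp_add]
  congr 1
  field_simp
  linear_combination (-2 ^ (k + 1)) * hsA

/-- For `0 < x < 1/2` and `η ≥ 1`,
`∑_{k≥0} exp(2^k log x - (1+η)/2^{k+1}) ≤ (13/4) exp(-√(-2 (log x)(1+η)))`. -/
theorem double_exponential_sum_bound (x η : ℝ) (hx0 : 0 < x) (hx : x < 1 / 2)
    (hη : 1 ≤ η) :
    (∑' k : ℕ, Real.exp (2 ^ k * Real.log x - (1 + η) / 2 ^ (k + 1))) ≤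
      (13 / 4) * Real.exp (-Real.sqrt (-(2 * Real.log x * (1 + η)))) := by
  have hlog : log x < -0.6931471803 := by
    have := log_lt_log hx0 hx
    rw [one_div, log_inv] at this
    linarith [log_two_gt_d9]
  set s := √(-(2 * log x * (1 + η)))
  have hs2 : s ^ 2 = -(2 * log x * (1 + η)) := sq_sqrt (by nlinarith)
  have hs : 83 / 50 ≤ s := (le_sqrt' (by norm_num)).2 (by nlinarith)
  have hρ : 0 < -2 * log x / s := div_pos (by linarith) (by linarith)
  simp_rw [exp_two_pow_mul_sub_eq (by linarith : log x ≠ 0) (by linarith : 0 < s) hs2,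
    tsum_mul_left]
  rw [mul_comm]
  gcongr
  exact tsum_bump_two_pow_mul_le (by linarith) hρ
end

section
/- Under condition A with ψ = 1 and empty mass below β, the masses I_k = ν({s : δX(s) < β + (η−β)/2^k}) satisfy ν(I_{k+1}) ≤ Λ ν(I_k)², and hence by induction ν(I_k) ≤ Λ^{2^k − 1} δ^{2^k} whenever ν(I_0) ≤ δ. -/
open scoped Classical

/-- Under condition A with `ψ = 1` and no mass strictly below the minimum `β`,
the masses `I_k = ν({s : δX(s) < β + (η-β)/2^k})` satisfy the recursion
`I_{k+1} ≤ Λ I_k²`, and hence `I_k ≤ Λ^(2^k-1) δ^(2^k)` whenever `I_0 ≤ δ`. -/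
theorem condA_mass_recursion {T : Type*} [Fintype T]
    (ν : T → ℝ) (hν : ∀ s, 0 < ν s) (hsum : ∑ s, ν s = 1)
    (δX : T → ℝ) (β η Λ δ φ : ℝ)
    (hβ : ∀ s, β ≤ δX s)
    (hβ0 : (∑ s ∈ Finset.univ.filter (fun s => δX s < β), ν s) = 0)
    (hβη : β < η) (hΛ : 1 ≤ Λ) (hδ : 0 < δ) (hφ : 0 < φ)
    (hcondA : ∀ x₂ : ℝ, β < x₂ →
      (∑ s ∈ Finset.univ.filter (fun s => δX s < (β + x₂) / 2), ν s) ≤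
        Λ * (∑ s ∈ Finset.univ.filter (fun s => δX s < β), ν s) ^ φ +
        Λ * (∑ s ∈ Finset.univ.filter (fun s => δX s < x₂), ν s) ^ 2)
    (m : ℕ → ℝ)
    (hm : ∀ k, m k = ∑ s ∈ Finset.univ.filter
      (fun s => δX s < β + (η - β) / 2 ^ k), ν s) :
    (∀ k, m (k + 1) ≤ Λ * (m k) ^ 2) ∧
    (m 0 ≤ δ → ∀ k, m k ≤ Λ ^ (2 ^ k - 1) * δ ^ (2 ^ k)) := by
  have hΛ0 : (0:ℝ) < Λ := lt_of_lt_of_le one_pos hΛ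
  have hmnonneg : ∀ k, 0 ≤ m k := by
    intro k
    rw [hm k]
    exact Finset.sum_nonneg fun s _ => (hν s).le
  have hrec : ∀ k, m (k + 1) ≤ Λ * (m k) ^ 2 := by
    intro k
    have hx2 : β < β + (η - β) / 2 ^ k := by
      have h2 : (0:ℝ) < 2 ^ k := by positivity
      have : (0:ℝ) < (η - β) / 2 ^ k := div_pos (by linarith) h2
      linarith
    have h := hcondA _ hx2
    have heq : (β + (β + (η - β) / 2 ^ k)) / 2 = β + (η - β) / 2 ^ (k + 1) := by
      have h2 : (2:ℝ) ^ k ≠ 0 := by positivity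
      field_simp
      ring
    rw [heq, hβ0, Real.zero_rpow hφ.ne', mul_zero, zero_add, ← hm (k+1), ← hm k] at h
    exact h
  refine ⟨hrec, fun h0 k => ?_⟩
  induction k with
  | zero => simpa using h0
  | succ k ih =>
    have hsq : (m k) ^ 2 ≤ (Λ ^ (2 ^ k - 1) * δ ^ (2 ^ k)) ^ 2 :=
      pow_le_pow_left₀ (hmnonneg k) ih 2
    calc m (k + 1) ≤ Λ * (m k) ^ 2 := hrec k
      _ ≤ Λ * (Λ ^ (2 ^ k - 1) * δ ^ (2 ^ k)) ^ 2 := by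
          exact mul_le_mul_of_nonneg_left hsq hΛ0.le
      _ = Λ ^ (2 ^ (k+1) - 1) * δ ^ (2 ^ (k+1)) := by
          have h1 : (1:ℕ) ≤ 2 ^ k := Nat.one_le_two_pow
          have he1 : 2 ^ (k+1) - 1 = 2 * (2 ^ k - 1) + 1 := by
            rw [pow_succ]; omega
          have he2 : 2 ^ (k+1) = 2 * 2 ^ k := by rw [pow_succ]; ring
          rw [he1, he2, mul_pow, ← pow_mul, ← pow_mul, pow_succ]
          ring
end

section
/- If the set of δX values satisfies the iterated doubling bound ν({δX ∈ κ^j I}) ≥ min{δ, (1+σ)^j ν({δX ∈ I})} for all j with κ^j I ⊂ (−∞, η), and ν({δX < η}) ≤ δ₀ < δ, then for any interval I = [0, ℓ) ⊂ [−1, η), ν({δX ∈ I}) ≤ δ₀ (σ+1) (ℓ/η)^γ with γ = log(1+σ)/log κ. -/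
open scoped Classical

/-- Iterated doubling bound: if
`ν({δX ∈ κ^j I}) ≥ min{δ, (1+σ)^j ν({δX ∈ I})}` whenever `κ^j I ⊂ (-∞, η)`
(`κ^j I` being `I = [0,ℓ)` dilated about its center by `κ^j`), and
`ν({δX < η}) ≤ δ₀ < δ`, then
`ν({δX ∈ [0,ℓ)}) ≤ δ₀ (σ+1) (ℓ/η)^γ` with `γ = log(1+σ)/log κ`. -/
theorem iterated_doubling_interval_bound {T : Type*} [Fintype T]
    (ν : T → ℝ) (hν : ∀ s, 0 < ν s) (hsum : ∑ s, ν s = 1)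
    (δX : T → ℝ) (κ σ δ δ₀ ℓ η : ℝ)
    (hκ : 1 < κ) (hσ : 0 < σ) (hδ₀ : 0 < δ₀) (hδ₀δ : δ₀ < δ)
    (hℓ : 0 < ℓ) (hℓη : ℓ ≤ η)
    (hsmall : (∑ s ∈ Finset.univ.filter (fun s => δX s < η), ν s) ≤ δ₀)
    (hdouble : ∀ j : ℕ, ℓ / 2 + κ ^ j * (ℓ / 2) ≤ η →
      (∑ s ∈ Finset.univ.filter
          (fun s => δX s ∈ Set.Ico (ℓ / 2 - κ ^ j * (ℓ / 2)) (ℓ / 2 + κ ^ j * (ℓ / 2))),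
        ν s) ≥
      min δ ((1 + σ) ^ j *
        ∑ s ∈ Finset.univ.filter (fun s => δX s ∈ Set.Ico 0 ℓ), ν s)) :
    (∑ s ∈ Finset.univ.filter (fun s => δX s ∈ Set.Ico 0 ℓ), ν s) ≤
      δ₀ * (σ + 1) * (ℓ / η) ^ (Real.log (1 + σ) / Real.log κ) := by
  set P := ∑ s ∈ Finset.univ.filter (fun s => δX s ∈ Set.Ico 0 ℓ), ν s with hPdef
  have hη : 0 < η := lt_of_lt_of_le hℓ hℓη
  have hηℓ : 1 ≤ η / ℓ := (one_le_div hℓ).2 hℓη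
  have hlogκ : 0 < Real.log κ := Real.log_pos hκ
  have hlogσ : 0 ≤ Real.log (1 + σ) := Real.log_nonneg (by linarith)
  set x := Real.log (η / ℓ) / Real.log κ with hxdef
  have hx0 : 0 ≤ x := div_nonneg (Real.log_nonneg hηℓ) hlogκ.le
  set j := ⌊x⌋₊ with hjdef
  have hjx : (j : ℝ) ≤ x := Nat.floor_le hx0
  have hxj1 : x < j + 1 := Nat.lt_floor_add_one x
  have hκ0 : (0:ℝ) < κ := by linarith
  have hσ1 : (0:ℝ) < 1 + σ := by linarith
  have hκj : κ ^ j ≤ η / ℓ := by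
    have h1 : Real.log (κ ^ j) ≤ Real.log (η / ℓ) := by
      rw [Real.log_pow]
      have hx : x * Real.log κ = Real.log (η / ℓ) := by
        rw [hxdef]; field_simp
      nlinarith
    exact (Real.log_le_log_iff (pow_pos hκ0 j) (by positivity)).1 h1
  have hcond : ℓ / 2 + κ ^ j * (ℓ / 2) ≤ η := by
    have h1 : κ ^ j * (ℓ / 2) ≤ (η / ℓ) * (ℓ / 2) :=
      mul_le_mul_of_nonneg_right hκj (by positivity)
    have h2 : (η / ℓ) * (ℓ / 2) = η / 2 := by field_simp
    linarith
  have hsub : (∑ s ∈ Finset.univ.filter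
      (fun s => δX s ∈ Set.Ico (ℓ / 2 - κ ^ j * (ℓ / 2)) (ℓ / 2 + κ ^ j * (ℓ / 2))),
      ν s) ≤ δ₀ := by
    refine le_trans ?_ hsmall
    apply Finset.sum_le_sum_of_subset_of_nonneg
    · intro s hs
      simp only [Finset.mem_filter, Finset.mem_univ, true_and, Set.mem_Ico] at *
      exact lt_of_lt_of_le hs.2 hcond
    · intro s _ _; exact (hν s).le
  have hkey : (1 + σ) ^ j * P ≤ δ₀ := by
    have h := hdouble j hcond
    rcases min_cases δ ((1 + σ) ^ j * P) with ⟨heq, hle⟩ | ⟨heq, hlt⟩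
    · exfalso; rw [heq] at h; linarith [le_trans h hsub]
    · rw [heq] at h; linarith [le_trans h hsub]
  set γ := Real.log (1 + σ) / Real.log κ with hγdef
  have hApos : (0:ℝ) < (η / ℓ) ^ γ := Real.rpow_pos_of_pos (by positivity) γ
  have hpow : (η / ℓ) ^ γ ≤ (1 + σ) ^ j * (1 + σ) := by
    have h1 : (η / ℓ) ^ γ = Real.exp (Real.log (η / ℓ) * γ) :=
      Real.rpow_def_of_pos (by positivity) γ
    have h2 : (1 + σ) ^ j * (1 + σ) = Real.exp (((j:ℝ) + 1) * Real.log (1 + σ)) := by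
      rw [← pow_succ, ← Real.exp_log (pow_pos hσ1 (j + 1)), Real.log_pow]
      push_cast; ring_nf
    rw [h1, h2]
    apply Real.exp_le_exp.2
    have hx : Real.log (η / ℓ) * γ = x * Real.log (1 + σ) := by
      rw [hxdef, hγdef]; ring
    rw [hx]
    nlinarith
  have hflip : (ℓ / η) ^ γ = ((η / ℓ) ^ γ)⁻¹ := by
    rw [← Real.inv_rpow (by positivity), inv_div]
  have hPle : P ≤ δ₀ / (1 + σ) ^ j := by
    rw [le_div_iff₀ (pow_pos hσ1 j)]
    linarith [hkey, mul_comm ((1 + σ) ^ j) P]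
  refine le_trans hPle ?_
  rw [div_le_iff₀ (pow_pos hσ1 j), hflip]
  have h1 : 1 ≤ ((1 + σ) ^ j * (1 + σ)) / ((η / ℓ) ^ γ) := (one_le_div hApos).2 hpow
  calc δ₀ = δ₀ * 1 := (mul_one δ₀).symm
    _ ≤ δ₀ * (((1 + σ) ^ j * (1 + σ)) / ((η / ℓ) ^ γ)) :=
        mul_le_mul_of_nonneg_left h1 hδ₀.le
    _ = δ₀ * (σ + 1) * ((η / ℓ) ^ γ)⁻¹ * (1 + σ) ^ j := by ring
end

section
/- Recursive good-set bound: if a_{k+1} ≤ Λ(c^φ + a_k²) for all k, where Λ ≥ 1, c ≥ 0, 0 < φ < 1, and a_k is nonincreasing in k, then for every k either a_k ≤ 3Λ c^φ or a_k ≤ (3Λ/2)^{2^k − 1} a_0^{2^k}. -/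
/-- Recursive good-set bound: if a nonincreasing nonnegative sequence satisfies
`a (k+1) ≤ Λ (c^φ + a k²)` with `Λ ≥ 1`, `c ≥ 0`, `0 < φ < 1`, then for every `k`,
either `a k ≤ 3 Λ c^φ` or `a k ≤ (3Λ/2)^(2^k - 1) * (a 0)^(2^k)`. -/
theorem recursive_good_set_bound (a : ℕ → ℝ) (Λ c φ : ℝ)
    (ha0 : ∀ k, 0 ≤ a k) (hmono : Antitone a)
    (hΛ : 1 ≤ Λ) (hc : 0 ≤ c) (hφ0 : 0 < φ) (hφ1 : φ < 1)
    (hrec : ∀ k, a (k + 1) ≤ Λ * (c ^ φ + (a k) ^ 2)) :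
    ∀ k, a k ≤ 3 * Λ * c ^ φ ∨
      a k ≤ (3 * Λ / 2) ^ (2 ^ k - 1) * (a 0) ^ (2 ^ k) := by
  have hcφ : 0 ≤ c ^ φ := Real.rpow_nonneg hc φ
  have hΛ0 : (0:ℝ) ≤ Λ := le_trans zero_le_one hΛ
  have hB : (0:ℝ) ≤ 3 * Λ / 2 := by positivity
  intro k
  induction k with
  | zero =>
      right
      simp
  | succ k ih =>
      rcases ih with h | h
      · left
        exact le_trans (hmono (Nat.le_succ k)) h
      · by_cases hsmall : (a k) ^ 2 ≤ 2 * c ^ φ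
        · left
          calc a (k+1) ≤ Λ * (c ^ φ + (a k) ^ 2) := hrec k
            _ ≤ Λ * (c ^ φ + 2 * c ^ φ) := by nlinarith
            _ = 3 * Λ * c ^ φ := by ring
        · right
          push_neg at hsmall
          have hcle : c ^ φ ≤ (a k) ^ 2 / 2 := by linarith
          have h1 : a (k+1) ≤ (3 * Λ / 2) * (a k) ^ 2 := by
            calc a (k+1) ≤ Λ * (c ^ φ + (a k) ^ 2) := hrec k
              _ ≤ Λ * ((a k)^2/2 + (a k) ^ 2) := by nlinarith
              _ = (3 * Λ / 2) * (a k) ^ 2 := by ring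
          have hsq : (a k) ^ 2 ≤ ((3 * Λ / 2) ^ (2 ^ k - 1) * (a 0) ^ (2 ^ k)) ^ 2 :=
            pow_le_pow_left₀ (ha0 k) h 2
          have hexp : 2 ^ (k+1) - 1 = (2 ^ k - 1) * 2 + 1 := by
            have : 1 ≤ 2 ^ k := Nat.one_le_two_pow
            omega
          calc a (k+1) ≤ (3 * Λ / 2) * ((3 * Λ / 2) ^ (2 ^ k - 1) * (a 0) ^ (2 ^ k)) ^ 2 := by
                nlinarith
            _ = (3 * Λ / 2) ^ ((2 ^ k - 1) * 2 + 1) * (a 0) ^ (2 ^ k * 2) := by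
                rw [mul_pow, ← pow_mul, ← pow_mul]; ring
            _ = (3 * Λ / 2) ^ (2 ^ (k+1) - 1) * (a 0) ^ (2 ^ (k+1)) := by
                rw [hexp, pow_succ, pow_succ 2 k]
end
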